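/- arXiv:1603.03908 — 4 statements merged into one kernel-verified Lean document; each statement's English description precedes it below -/
import Mathlib

section
/- Let U and W be disjoint sets with |U| odd and |W| even, and let L be a subgraph of K_{U∪W} - K_U with exactly μ pure edges, where μ ∈ {1,2}, such that every vertex of L has positive even degree. If |E(L)| ≤ 2(|U|+1) and some vertex of U has degree at least 4 in L, then there is a vertex x ∈ U with x ∉ V(L). -/
/-!
If every vertex of `U` lies in `L`, each has positive even degree, hence degree at least `2`, and
one has degree at least `4`; so the degrees over `U` sum to at least `2|U| + 2`. As `U` is
independent in `L`, this sum counts the edges meeting `U` exactly once each, and at least `μ ≥ 1`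
further (pure) edges avoid `U`. Hence `|E(L)| > 2(|U| + 1)`.
-/

open SimpleGraph

/-- The complete graph on the vertex type with all edges inside `U` removed:
`K_{U ∪ W} - K_U` when `U ∪ W` is the whole vertex set. -/
def holeGraphOn {V : Type*} (U : Set V) : SimpleGraph V where
  Adj x y := x ≠ y ∧ ¬ (x ∈ U ∧ y ∈ U)
  symm := ⟨fun x y ⟨h1, h2⟩ => ⟨h1.symm, fun h => h2 ⟨h.2, h.1⟩⟩⟩
  loopless := ⟨fun x ⟨h, _⟩ => h rfl⟩

/-- `x` and `y` are twin vertices of `G`. -/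
def IsTwin {V : Type*} (G : SimpleGraph V) (x y : V) : Prop :=
  G.neighborSet x \ {y} = G.neighborSet y \ {x}

open Finset

namespace SimpleGraph

variable {V : Type*} [Fintype V] (G : SimpleGraph V) [DecidableRel G.Adj]

lemma ncard_neighborSet_eq_degree (v : V) : (G.neighborSet v).ncard = G.degree v := by
  rw [Set.ncard_eq_toFinset_card', ← card_neighborFinset_eq_degree, neighborFinset]

lemma ncard_edgeSet_eq_card_edgeFinset : G.edgeSet.ncard = #G.edgeFinset := by
  rw [Set.ncard_eq_toFinset_card', edgeFinset]

lemma two_le_degree_of_mem_support {v : V} (hv : v ∈ G.support) (heven : Even (G.degree v)) :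
    2 ≤ G.degree v := by
  have := (G.degree_pos_iff_mem_support v).2 hv
  obtain ⟨k, hk⟩ := heven
  omega

lemma disjoint_incidenceFinset_of_not_adj [DecidableEq V] {u v : V} (h : ¬G.Adj u v)
    (hne : u ≠ v) : Disjoint (G.incidenceFinset u) (G.incidenceFinset v) := by
  rw [← disjoint_coe, coe_incidenceFinset, coe_incidenceFinset, Set.disjoint_iff_inter_eq_empty]
  exact G.incidenceSet_inter_incidenceSet_of_not_adj h hne

lemma card_edgeFinset_eq_sum_degree_add [DecidableEq V] {s : Finset V} (hs : G.IsIndepSet s) :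
    #G.edgeFinset = ∑ v ∈ s, G.degree v + #{e ∈ G.edgeFinset | ∀ v ∈ e, v ∉ s} := by
  have hmeet : {e ∈ G.edgeFinset | ¬∀ v ∈ e, v ∉ s} = s.biUnion fun v => G.incidenceFinset v := by
    ext e
    simp only [mem_filter, mem_biUnion, mem_incidenceFinset, incidenceSet, Set.mem_ofPred_eq,
      mem_edgeFinset]
    grind
  rw [← card_filter_add_card_filter_not (fun e : Sym2 V => ∀ v ∈ e, v ∉ s), hmeet,
    card_biUnion, add_comm]
  · simp_rw [card_incidenceFinset_eq_degree]
  · exact fun u hu v hv huv => G.disjoint_incidenceFinset_of_not_adj (hs hu hv huv) huv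

end SimpleGraph

lemma Finset.two_mul_card_add_two_le_sum {ι : Type*} [DecidableEq ι] {s : Finset ι} {f : ι → ℕ}
    (h2 : ∀ i ∈ s, 2 ≤ f i) {x : ι} (hx : x ∈ s) (h4 : 4 ≤ f x) : 2 * #s + 2 ≤ ∑ i ∈ s, f i :=
  calc 2 * #s + 2 = ∑ i ∈ s, (2 + if i = x then 2 else 0) := by
        simp [sum_add_distrib, hx, mul_comm]
    _ ≤ ∑ i ∈ s, f i := sum_le_sum fun i hi => by
        split_ifs with h
        · exact h ▸ h4
        · simpa using h2 i hi

theorem stmt7_general {V : Type*} [Fintype V] (U W : Set V)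
    (hdisj : Disjoint U W)
    (L : SimpleGraph V)
    (hsub : ∀ x y, L.Adj x y → ¬ (x ∈ U ∧ y ∈ U))
    (μ : ℕ) (hμ : μ = 1 ∨ μ = 2)
    (hpure : {e ∈ L.edgeSet | ∀ v ∈ e, v ∈ W}.ncard = μ)
    (heven : ∀ v, Even (L.neighborSet v).ncard)
    (hE : L.edgeSet.ncard ≤ 2 * (U.ncard + 1))
    (hdeg : ∃ x ∈ U, 4 ≤ (L.neighborSet x).ncard) :
    ∃ x ∈ U, x ∉ L.support := by
  classical
  by_contra! hsupp
  simp only [ncard_neighborSet_eq_degree] at heven hdeg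
  obtain ⟨x, hxU, hx4⟩ := hdeg
  have hindep : L.IsIndepSet (U.toFinset : Set V) := fun u hu v hv _ huv =>
    hsub u v huv ⟨by simpa using hu, by simpa using hv⟩
  have hpure_le : μ ≤ #{e ∈ L.edgeFinset | ∀ v ∈ e, v ∉ U.toFinset} := by
    rw [← hpure, Set.ncard_eq_toFinset_card']
    refine card_le_card fun e he => ?_
    simp only [Set.mem_toFinset, Set.mem_sep_iff, mem_filter, mem_edgeFinset] at he ⊢
    exact ⟨he.1, fun v hv => hdisj.notMem_of_mem_right (he.2 v hv)⟩
  have hsum : 2 * #U.toFinset + 2 ≤ ∑ v ∈ U.toFinset, L.degree v :=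
    two_mul_card_add_two_le_sum
      (fun v hv => L.two_le_degree_of_mem_support (hsupp v (by simpa using hv)) (heven v))
      (Set.mem_toFinset.2 hxU) hx4
  have hsplit := L.card_edgeFinset_eq_sum_degree_add hindep
  rw [ncard_edgeSet_eq_card_edgeFinset, Set.ncard_eq_toFinset_card'] at hE
  omega

theorem stmt7 {V : Type*} [Fintype V] (U W : Set V)
    (hdisj : Disjoint U W) (hcover : U ∪ W = Set.univ)
    (hUodd : Odd U.ncard) (hWeven : Even W.ncard)
    (L : SimpleGraph V)
    (hsub : ∀ x y, L.Adj x y → ¬ (x ∈ U ∧ y ∈ U))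
    (μ : ℕ) (hμ : μ = 1 ∨ μ = 2)
    (hpure : {e ∈ L.edgeSet | ∀ v ∈ e, v ∈ W}.ncard = μ)
    (heven : ∀ v, Even (L.neighborSet v).ncard)
    (hE : L.edgeSet.ncard ≤ 2 * (U.ncard + 1))
    (hdeg : ∃ x ∈ U, 4 ≤ (L.neighborSet x).ncard) :
    ∃ x ∈ U, x ∉ L.support :=
  stmt7_general U W hdisj L hsub μ hμ hpure heven hE hdeg
end

section
/- Let U and W be disjoint sets with |U| odd and |W| even, and let G be a subgraph of K_{U∪W} - K_U containing exactly μ pure edges, such that G has exactly one vertex of degree 4 and every other vertex of G has degree 2. Then the number of connected components of G is at most ⌊(|E(G)| + μ)/4⌋ - 1. -/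
open SimpleGraph

/-- The connected components of  containing at least one edge. -/
def nontrivialComponents {V : Type*} (G : SimpleGraph V) : Set G.ConnectedComponent :=
  {C | ∃ x y, G.Adj x y ∧ G.connectedComponentMk x = C}

/-!
Weigh every edge once and every pure edge (both ends in `W`) a second time, so that `G` has
total weight `|E(G)| + μ`. As `Wᶜ ⊆ U` is independent, every triangle has a pure edge.

If all neighbours of a vertex `x` have degree 2, the component of `x` has weight at least
`2 deg x`: besides the `deg x` edges at `x`, every neighbour `u` has an edge to its other
neighbour; two neighbours adjacent to each other share that edge, but then the triangle they form
with `x` contains a pure edge, which pays for the second one. So every nontrivial component has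
weight at least 4, the component of the vertex of degree 4 has weight at least 8, and with `k`
components `4 k + 4 ≤ |E(G)| + μ`.
-/

lemma Set.sum_ncard_le_ncard_of_pairwiseDisjoint {ι α : Type*} [Finite α] {t : Finset ι}
    {f : ι → Set α} {s : Set α} (hf : ∀ i ∈ t, f i ⊆ s) (hd : (t : Set ι).PairwiseDisjoint f) :
    ∑ i ∈ t, (f i).ncard ≤ s.ncard := by
  rw [← finsum_mem_coe_finset, ← t.finite_toSet.ncard_biUnion (fun _ _ ↦ Set.toFinite _) hd]
  exact Set.ncard_le_ncard (Set.iUnion₂_subset hf)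

lemma Set.disjoint_sym2 {α : Type*} {s t : Set α} (h : Disjoint s t) :
    Disjoint s.sym2 t.sym2 := by
  refine Set.disjoint_left.2 fun z hs ht ↦ ?_
  induction z with
  | h x y => exact Set.disjoint_left.1 h (Set.mk_mem_sym2_iff.1 hs).1 (Set.mk_mem_sym2_iff.1 ht).1

lemma Set.sep_forall_mem_eq_inter_sym2 {α : Type*} (S : Set (Sym2 α)) (W : Set α) :
    {e ∈ S | ∀ v ∈ e, v ∈ W} = S ∩ W.sym2 := by
  ext e
  simp [Set.mem_sym2_iff_subset, Set.subset_def]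

namespace SimpleGraph

variable {V : Type*} {G : SimpleGraph V}

noncomputable def pureWeight (W : Set V) (S : Set (Sym2 V)) : ℕ :=
  S.ncard + (S ∩ W.sym2).ncard

lemma sum_pureWeight_le [Finite V] {ι : Type*} (W : Set V) (S : Set (Sym2 V)) {t : Finset ι}
    {g : ι → Set (Sym2 V)} (hg : (t : Set ι).PairwiseDisjoint g) :
    ∑ i ∈ t, pureWeight W (S ∩ g i) ≤ pureWeight W S := by
  simp only [pureWeight, Finset.sum_add_distrib]
  refine add_le_add (Set.sum_ncard_le_ncard_of_pairwiseDisjoint (fun _ _ ↦ Set.inter_subset_left)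
    (hg.mono fun _ ↦ Set.inter_subset_right)) (Set.sum_ncard_le_ncard_of_pairwiseDisjoint
    (fun _ _ ↦ Set.inter_subset_inter_left _ Set.inter_subset_left) (hg.mono fun _ ↦ ?_))
  exact Set.inter_subset_left.trans Set.inter_subset_right

lemma sum_pureWeight_connectedComponent_le [Finite V] (W : Set V)
    (t : Finset G.ConnectedComponent) :
    ∑ C ∈ t, pureWeight W (G.edgeSet ∩ C.supp.sym2) ≤ pureWeight W G.edgeSet :=
  sum_pureWeight_le W G.edgeSet fun _ _ _ _ hCD ↦
    Set.disjoint_sym2 (G.pairwise_disjoint_supp_connectedComponent hCD)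

lemma mk_mem_sym2_or_of_isIndepSet_compl {W : Set V} (hW : G.IsIndepSet Wᶜ) {a b c : V}
    (hab : G.Adj a b) (hac : G.Adj a c) (hbc : G.Adj b c) :
    s(a, b) ∈ W.sym2 ∨ s(a, c) ∈ W.sym2 ∨ s(b, c) ∈ W.sym2 := by
  have cover : ∀ {u v}, G.Adj u v → u ∈ W ∨ v ∈ W := fun huv ↦ by
    by_contra! h
    exact hW h.1 h.2 (G.ne_of_adj huv) huv
  simp only [Set.mk_mem_sym2_iff]
  have := cover hab
  have := cover hac
  have := cover hbc
  tauto

lemma exists_neighborSet_sdiff_eq_singleton {v a : V}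
    (h : (G.neighborSet v).ncard = 2) (ha : G.Adj v a) : ∃ b, G.neighborSet v \ {a} = {b} := by
  rw [← Set.ncard_eq_one, Set.ncard_sdiff_singleton_of_mem (show a ∈ G.neighborSet v from ha), h]

section OtherNeighbor

variable {x : V} {other : V → V}

lemma adj_other (hother : ∀ u ∈ G.neighborSet x, G.neighborSet u \ {x} = {other u}) {u : V}
    (hu : u ∈ G.neighborSet x) : G.Adj u (other u) ∧ other u ≠ x :=
  show other u ∈ G.neighborSet u \ {x} from hother u hu ▸ rfl

lemma other_other (hother : ∀ u ∈ G.neighborSet x, G.neighborSet u \ {x} = {other u}) {u : V}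
    (hu : u ∈ G.neighborSet x) (hou : other u ∈ G.neighborSet x) : other (other u) = u := by
  have : u ∈ G.neighborSet (other u) \ {x} :=
    ⟨(adj_other hother hu).1.symm, (G.ne_of_adj hu).symm⟩
  rw [hother _ hou] at this
  exact this.symm

variable (G x other) in
def lowerTriangleNeighbors [LinearOrder V] : Set V :=
  {u ∈ G.neighborSet x | other u ∈ G.neighborSet x ∧ u < other u}

lemma ncard_neighborSet_sdiff_lowerTriangleNeighbors_le [LinearOrder V] [Finite V]
    (hother : ∀ u ∈ G.neighborSet x, G.neighborSet u \ {x} = {other u}) :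
    (G.neighborSet x \ G.lowerTriangleNeighbors x other).ncard ≤
      ((G.edgeSet ∩ (G.connectedComponentMk x).supp.sym2) \ G.incidenceSet x).ncard := by
  refine Set.ncard_le_ncard_of_injOn (fun u ↦ s(u, other u)) (fun u hu ↦ ?_) ?_
  · obtain ⟨hadj, hne⟩ := adj_other hother hu.1
    have hu' : u ∈ (G.connectedComponentMk x).supp :=
      (ConnectedComponent.mem_supp_congr_adj _ hu.1).1 rfl
    refine ⟨⟨hadj, hu', (ConnectedComponent.mem_supp_congr_adj _ hadj).1 hu'⟩, fun h ↦ ?_⟩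
    rcases Sym2.mem_iff.1 h.2 with h | h
    · exact G.ne_of_adj hu.1 h
    · exact hne h.symm
  · rintro u ⟨hu, hu'⟩ v ⟨hv, hv'⟩ huv
    rcases Sym2.eq_iff.1 huv with ⟨h, -⟩ | ⟨h, h'⟩
    · exact h
    · subst h'
      simp only [lowerTriangleNeighbors, Set.mem_ofPred_eq, not_and, not_lt] at hu' hv'
      rw [← h] at hv'
      exact le_antisymm (hv' hv hu) (hu' hu hv)

lemma min_other_eq_of_mem_lowerTriangleNeighbors [LinearOrder V]
    (hother : ∀ u ∈ G.neighborSet x, G.neighborSet u \ {x} = {other u}) {u w : V}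
    (hu : u ∈ G.lowerTriangleNeighbors x other) (hw : w ∈ ({x, u, other u} : Set V))
    (hwx : w ≠ x) : min w (other w) = u := by
  obtain ⟨hu, hou, hlt⟩ := hu
  rcases hw with rfl | rfl | rfl
  · exact absurd rfl hwx
  · exact min_eq_left hlt.le
  · rw [other_other hother hu hou]
    exact min_eq_right hlt.le

lemma ncard_lowerTriangleNeighbors_le [LinearOrder V] [Finite V] {W : Set V}
    (hW : G.IsIndepSet Wᶜ)
    (hother : ∀ u ∈ G.neighborSet x, G.neighborSet u \ {x} = {other u}) :
    (G.lowerTriangleNeighbors x other).ncard ≤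
      (G.edgeSet ∩ (G.connectedComponentMk x).supp.sym2 ∩ W.sym2).ncard := by
  have hpick : ∀ u ∈ G.lowerTriangleNeighbors x other, ∃ y z, y ∈ ({u, other u} : Set V) ∧
      z ∈ ({x, u, other u} : Set V) ∧ G.Adj y z ∧ s(y, z) ∈ W.sym2 := by
    rintro u ⟨hu, hou, -⟩
    have hadj := (adj_other hother hu).1
    rcases mk_mem_sym2_or_of_isIndepSet_compl hW hadj (G.adj_symm hu) (G.adj_symm hou)
      with h | h | h
    · exact ⟨u, other u, by simp, by simp, hadj, h⟩
    · exact ⟨u, x, by simp, by simp, G.adj_symm hu, h⟩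
    · exact ⟨other u, x, by simp, by simp, G.adj_symm hou, h⟩
  choose! y z hy hz hadj hpure using hpick
  have hsupp : ∀ u ∈ G.lowerTriangleNeighbors x other, ∀ w ∈ ({x, u, other u} : Set V),
      w ∈ (G.connectedComponentMk x).supp := by
    rintro u ⟨hu, hou, -⟩ w (rfl | rfl | rfl)
    exacts [rfl, (ConnectedComponent.mem_supp_congr_adj _ hu).1 rfl,
      (ConnectedComponent.mem_supp_congr_adj _ hou).1 rfl]
  have hyx : ∀ u ∈ G.lowerTriangleNeighbors x other, y u ≠ x := by
    rintro u ⟨hu, hou, hlt⟩ h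
    rcases hy u ⟨hu, hou, hlt⟩ with h' | h' <;> rw [h'] at h
    exacts [G.ne_of_adj hu h.symm, G.ne_of_adj hou h.symm]
  refine Set.ncard_le_ncard_of_injOn (fun u ↦ s(y u, z u)) (fun u hu ↦ ⟨⟨hadj u hu,
    hsupp u hu _ (Or.inr (hy u hu)), hsupp u hu _ (hz u hu)⟩, hpure u hu⟩) ?_
  intro u hu v hv huv
  have hyv : y u ∈ ({x, v, other v} : Set V) := by
    have := Sym2.mem_mk_left (y u) (z u)
    rw [show s(y u, z u) = s(y v, z v) from huv, Sym2.mem_iff] at this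
    rcases this with h | h <;> rw [h]
    exacts [Or.inr (hy v hv), hz v hv]
  rw [← min_other_eq_of_mem_lowerTriangleNeighbors hother hu (Or.inr (hy u hu)) (hyx u hu),
    min_other_eq_of_mem_lowerTriangleNeighbors hother hv hyv (hyx u hu)]

end OtherNeighbor

lemma two_mul_ncard_neighborSet_le_pureWeight [Finite V] {W : Set V} (hW : G.IsIndepSet Wᶜ)
    {x : V} (hdeg : ∀ u ∈ G.neighborSet x, (G.neighborSet u).ncard = 2) :
    2 * (G.neighborSet x).ncard ≤
      pureWeight W (G.edgeSet ∩ (G.connectedComponentMk x).supp.sym2) := by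
  let _ : LinearOrder V := IsWellOrder.linearOrder WellOrderingRel
  have hother : ∀ u ∈ G.neighborSet x, ∃ b, G.neighborSet u \ {x} = {b} := fun u hu ↦
    exists_neighborSet_sdiff_eq_singleton (hdeg u hu) (G.adj_symm hu)
  choose! other hother using hother
  have hstar : G.incidenceSet x ⊆ G.edgeSet ∩ (G.connectedComponentMk x).supp.sym2 := by
    rintro ⟨a, b⟩ ⟨hab, hx⟩
    rcases Sym2.mem_iff.1 hx with rfl | rfl
    · exact ⟨hab, rfl, (ConnectedComponent.mem_supp_congr_adj _ hab).1 rfl⟩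
    · exact ⟨hab, (ConnectedComponent.mem_supp_congr_adj _ hab).2 rfl, rfl⟩
  have hstar_card : (G.incidenceSet x).ncard = (G.neighborSet x).ncard := by
    simpa only [Nat.card_coe_set_eq] using Nat.card_congr (G.incidenceSetEquivNeighborSet x)
  have := Set.ncard_sdiff_add_ncard_of_subset hstar
  have := Set.ncard_sdiff_add_ncard_of_subset
    (show G.lowerTriangleNeighbors x other ⊆ G.neighborSet x from fun _ hu ↦ hu.1)
  have := ncard_neighborSet_sdiff_lowerTriangleNeighbors_le hother
  have := ncard_lowerTriangleNeighbors_le hW hother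
  rw [pureWeight]
  omega

lemma four_le_pureWeight [Finite V] {W : Set V} (hW : G.IsIndepSet Wᶜ)
    {C : G.ConnectedComponent} (hC : C ∈ nontrivialComponents G)
    (hdeg : ∀ v ∈ C.supp, v ∈ G.support → (G.neighborSet v).ncard = 2) :
    4 ≤ pureWeight W (G.edgeSet ∩ C.supp.sym2) := by
  obtain ⟨x, y, hxy, rfl⟩ := hC
  have := two_mul_ncard_neighborSet_le_pureWeight hW (x := x) fun u hu ↦
    hdeg u ((ConnectedComponent.mem_supp_congr_adj _ hu).1 rfl) ⟨x, G.adj_symm hu⟩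
  rwa [hdeg x rfl ⟨y, hxy⟩] at this

end SimpleGraph

theorem stmt9_general {V : Type*} [Fintype V] (U W : Set V)
    (hcover : U ∪ W = Set.univ)
    (G : SimpleGraph V)
    (hsub : ∀ x y, G.Adj x y → ¬ (x ∈ U ∧ y ∈ U))
    (μ : ℕ)
    (hpure : {e ∈ G.edgeSet | ∀ v ∈ e, v ∈ W}.ncard = μ)
    (hdeg : ∃ x₀, (G.neighborSet x₀).ncard = 4 ∧
      ∀ v ∈ G.support, v ≠ x₀ → (G.neighborSet v).ncard = 2) :
    (nontrivialComponents G).ncard ≤ (G.edgeSet.ncard + μ) / 4 - 1 := by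
  classical
  obtain ⟨x₀, hx₀, hdeg⟩ := hdeg
  have hW : G.IsIndepSet Wᶜ :=
    Set.Pairwise.mono (Set.compl_subset_iff_union.2 (by rwa [Set.union_comm]))
      fun a ha b hb _ hab ↦ hsub a b hab ⟨ha, hb⟩
  have hlow : ∀ C ∈ nontrivialComponents G, 4 + (if C = G.connectedComponentMk x₀ then 4 else 0)
      ≤ pureWeight W (G.edgeSet ∩ C.supp.sym2) := by
    intro C hC
    split_ifs with h
    · subst h
      simpa [hx₀] using two_mul_ncard_neighborSet_le_pureWeight hW fun u hu ↦
        hdeg u ⟨x₀, G.adj_symm hu⟩ (G.ne_of_adj hu).symm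
    · exact four_le_pureWeight hW hC fun v hv hvs ↦ hdeg v hvs fun h' ↦ h (h' ▸ hv).symm
  have hfin := Set.toFinite (nontrivialComponents G)
  rw [Set.ncard_eq_toFinset_card _ hfin]
  have hx₀C : G.connectedComponentMk x₀ ∈ hfin.toFinset := by
    obtain ⟨y, hy⟩ := Set.nonempty_of_ncard_ne_zero (s := G.neighborSet x₀) (by omega)
    simpa using ⟨x₀, y, hy, rfl⟩
  have hlower := Finset.sum_le_sum (s := hfin.toFinset) fun C hC ↦ hlow C (by simpa using hC)
  rw [Finset.sum_add_distrib, Finset.sum_const, smul_eq_mul, Finset.sum_ite_eq', if_pos hx₀C]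
    at hlower
  have hupper := sum_pureWeight_connectedComponent_le W hfin.toFinset
  rw [pureWeight, ← Set.sep_forall_mem_eq_inter_sym2, hpure] at hupper
  omega

theorem stmt9 {V : Type*} [Fintype V] (U W : Set V)
    (hdisj : Disjoint U W) (hcover : U ∪ W = Set.univ)
    (hUodd : Odd U.ncard) (hWeven : Even W.ncard)
    (G : SimpleGraph V)
    (hsub : ∀ x y, G.Adj x y → ¬ (x ∈ U ∧ y ∈ U))
    (μ : ℕ)
    (hpure : {e ∈ G.edgeSet | ∀ v ∈ e, v ∈ W}.ncard = μ)
    (hdeg : ∃ x₀, (G.neighborSet x₀).ncard = 4 ∧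
      ∀ v ∈ G.support, v ≠ x₀ → (G.neighborSet v).ncard = 2) :
    (nontrivialComponents G).ncard ≤ (G.edgeSet.ncard + μ) / 4 - 1 :=
  stmt9_general U W hcover G hsub μ hpure hdeg
end

section
/- Suppose a is an even nonnegative integer, c is a nonnegative integer with (a,c) ≠ (0,0), and w ≥ 6 is even. Define n and b to be the unique integers with a + 2c = n·w - 2b and 0 ≤ b ≤ (w-2)/2. If a + 2c is not congruent to 2 modulo w, and additionally c is not congruent to 2 modulo w/2 when a = 0, then there exist integers ℓ_1, ..., ℓ_n with ℓ_i ∈ {w/2, ..., w} for i ∈ {2, ..., n}, ℓ_1 ∈ {(w-2b)/2, ..., w-2b} \ {1, 2}, and ℓ_1 + ... + ℓ_n = a + c. -/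
/-!
Write `w = 2m`, `a = 2s` and `n = k + 1`, so that `s + c + b = (k + 1) m`. The hypothesis
`a + 2c ≢ 2 (mod w)` rules out `w - 2b = 2`, so the window for `ℓ₁` starts at `w - 2b ≥ 4`.
Take `ℓ₁ = w - 2b` if `a ≥ w - 2b`, and otherwise `ℓ₁ = (w - 2b + a)/2 = m - b + s`, which
leaves exactly `k m` for the other lengths; this `ℓ₁` equals `2` only when `a = 0` and
`c ≡ 2 (mod m)`. In both cases the remainder `a + c - ℓ₁` lies in `[k m, 2 k m]` and is split
greedily into `k` lengths from `[m, 2m]`.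
-/

theorem exists_fin_sum_eq_of_mul_le_of_le_mul {lo hi : ℕ} :
    ∀ {n S : ℕ}, n * lo ≤ S → S ≤ n * hi →
      ∃ f : Fin n → ℕ, ∑ i, f i = S ∧ ∀ i, lo ≤ f i ∧ f i ≤ hi
  | 0, S, _, hS => ⟨Fin.elim0, by simp_all, fun i => i.elim0⟩
  | n + 1, S, hlo, hhi => by
    have hlohi : lo ≤ hi := Nat.le_of_mul_le_mul_left (hlo.trans hhi) n.succ_pos
    have hnlohi : n * lo ≤ n * hi := Nat.mul_le_mul_left n hlohi
    rw [Nat.succ_mul] at hlo hhi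
    obtain ⟨f, hf, hfb⟩ := exists_fin_sum_eq_of_mul_le_of_le_mul (lo := lo) (hi := hi)
      (n := n) (S := S - min hi (S - n * lo)) (by omega) (by omega)
    refine ⟨Fin.cons (min hi (S - n * lo)) f, ?_, Fin.cases ?_ hfb⟩
    · rw [Fin.sum_cons, hf]
      omega
    · simp only [Fin.cons_zero]
      omega

theorem exists_first_cycle_length {a c w k b : ℕ} (ha : Even a) (hw : 6 ≤ w) (hweven : Even w)
    (hnb : a + 2 * c + 2 * b = (k + 1) * w) (hb : 2 * b + 2 ≤ w)
    (h1 : (a + 2 * c) % w ≠ 2) (h2 : a = 0 → c % (w / 2) ≠ 2) :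
    ∃ v, ((w - 2 * b) / 2 ≤ v ∧ v ≤ w - 2 * b ∧ v ≠ 1 ∧ v ≠ 2) ∧
      k * (w / 2) + v ≤ a + c ∧ a + c ≤ k * w + v := by
  obtain ⟨m, rfl⟩ := hweven
  obtain ⟨s, rfl⟩ := ha
  rw [show (m + m) / 2 = m by omega] at h2 ⊢
  rw [show (k + 1) * (m + m) = k * m + k * m + m + m by ring] at hnb
  rw [mul_add]
  have hb4 : 2 * b + 4 ≤ m + m := by
    by_contra hb4
    apply h1
    rw [show s + s + 2 * c = 2 + k * (m + m) by rw [mul_add]; omega,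
      Nat.add_mul_mod_self_right, Nat.mod_eq_of_lt (by omega)]
  by_cases hwa : m + m - 2 * b ≤ s + s
  · exact ⟨m + m - 2 * b, by omega, by omega⟩
  · have hv : m - b + s ≠ 2 := by
      rintro hv
      apply h2 (by omega)
      rw [show c = 2 + k * m by omega, Nat.add_mul_mod_self_right, Nat.mod_eq_of_lt (by omega)]
    exact ⟨m - b + s, by omega, by omega⟩

theorem stmt14 (a c w n b : ℕ) (ha : Even a) (hac : ¬ (a = 0 ∧ c = 0))
    (hw : 6 ≤ w) (hweven : Even w)
    (hnb : a + 2 * c + 2 * b = n * w) (hb : 2 * b + 2 ≤ w)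
    (h1 : (a + 2 * c) % w ≠ 2)
    (h2 : a = 0 → c % (w / 2) ≠ 2) :
    ∃ ℓ : Fin n → ℕ, (∑ i, ℓ i = a + c) ∧
      ∀ i : Fin n,
        (i.val = 0 →
          (w - 2 * b) / 2 ≤ ℓ i ∧ ℓ i ≤ w - 2 * b ∧ ℓ i ≠ 1 ∧ ℓ i ≠ 2) ∧
        (i.val ≠ 0 → w / 2 ≤ ℓ i ∧ ℓ i ≤ w) := by
  obtain ⟨k, rfl⟩ : ∃ k, n = k + 1 :=
    Nat.exists_eq_succ_of_ne_zero (by rintro rfl; rw [zero_mul] at hnb; omega)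
  obtain ⟨v, hv, hlo, hhi⟩ := exists_first_cycle_length ha hw hweven hnb hb h1 h2
  obtain ⟨f, hf, hfb⟩ :=
    exists_fin_sum_eq_of_mul_le_of_le_mul (lo := w / 2) (hi := w) (n := k)
      (S := a + c - v) (by omega) (by omega)
  refine ⟨Fin.cons v f, by rw [Fin.sum_cons, hf]; omega, Fin.cases ?_ fun i => ?_⟩
  · simpa using hv
  · simpa using hfb i
end

section
/- Let U' and W be disjoint sets with |U'| = 2n ≥ 2 and |W| = w ≥ 6 even, let a be an even nonnegative integer and c a nonnegative integer with (a,c) ≠ (0,0), and let b satisfy a + 2c = n·w - 2b with 0 ≤ b ≤ (w-2)/2. Suppose ℓ_1, ..., ℓ_n are integers with ℓ_i ∈ {w/2, ..., w} for 2 ≤ i ≤ n, ℓ_1 ∈ {(w-2b)/2, ..., w-2b} \ {1,2}, and ℓ_1 + ... + ℓ_n = a + c. Then for any pairwise edge-disjoint cycles C_1, ..., C_n in the complete graph K_W with lengths ℓ_1, ..., ℓ_n, there exists a packing of K_{U',W} ∪ C_1 ∪ ... ∪ C_n with a cycles of length 3 and c cycles of length 5 whose uncovered edges form a subgraph of K_{U',W}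 isomorphic to K_{2,2b}. -/
/-!
Enumerate `U'` as `p (i, d)` and let the `i`-th pair `p = p (i, false)`, `p' = p (i, true)` take
care of the cycle `C_i` together with a set `W_i ⊆ W` containing `V(C_i)`, of size `w - 2b` for
`i = 0` and `w` otherwise. Writing `|W_i| = A + 2C` and `ℓ_i = A + C` (`A` is even since `w` is),
the graph `K_{{p,p'},W_i} ∪ C_i` splits into `A` triangles and `C` pentagons: number the cycle
`0, …, ℓ - 1` and the rest of `W_i` as `ℓ, …, ℓ + C - 1`; the cycle edge `j < A` closes a triangle
with `p` or `p'` according to the parity of `j`, and the cycle edge `A + s` closes the pentagon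
`A + s, A + s + 1, p', ℓ + s, p`. Every edge at `p` and `p'` is then used exactly once, so the leave
consists of the edges between `p (0, _)` and the `2b` vertices of `W \ W_0`.
-/

open SimpleGraph Walk Function Set Sum

/-- The complete bipartite graph between `A` and `B`, as a graph on the ambient type. -/
def bipGraph {V : Type*} (A B : Set V) : SimpleGraph V where
  Adj x y := x ≠ y ∧ ((x ∈ A ∧ y ∈ B) ∨ (x ∈ B ∧ y ∈ A))
  symm := by
    constructor
    rintro x y ⟨h, h' | h'⟩
    · exact ⟨h.symm, Or.inr ⟨h'.2, h'.1⟩⟩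
    · exact ⟨h.symm, Or.inl ⟨h'.2, h'.1⟩⟩
  loopless := ⟨fun x ⟨h, _⟩ => h rfl⟩

/-- The complete graph on the set `W`, as a graph on the ambient type. -/
def completeOn {V : Type*} (W : Set V) : SimpleGraph V where
  Adj x y := x ≠ y ∧ x ∈ W ∧ y ∈ W
  symm := ⟨fun x y ⟨h, h1, h2⟩ => ⟨h.symm, h2, h1⟩⟩
  loopless := ⟨fun x ⟨h, _⟩ => h rfl⟩

lemma Set.Finite.exists_injective_range_eq {V ι : Type*} [Fintype ι] {S : Set V}
    (hS : S.Finite) (h : S.ncard = Fintype.card ι) : ∃ f : ι → V, Injective f ∧ range f = S := by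
  have := hS.fintype
  let e : ι ≃ S := Fintype.equivOfCardEq <| by
    rw [← h, ← Nat.card_coe_set_eq, Nat.card_eq_fintype_card]
  exact ⟨(↑) ∘ e, Subtype.val_injective.comp e.injective, by simp [range_comp]⟩

lemma exists_finAddEquiv_sigma_sum {ι : Type*} [Fintype ι] (A C : ι → ℕ) :
    ∃ σ : Fin (∑ i, A i + ∑ i, C i) ≃ Σ i, Fin (A i) ⊕ Fin (C i),
      ∀ k, (σ k).2.isLeft ↔ (k : ℕ) < ∑ i, A i := by
  let eA : (Σ i, Fin (A i)) ≃ Fin (∑ i, A i) := Fintype.equivFinOfCardEq (by simp)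
  let eC : (Σ i, Fin (C i)) ≃ Fin (∑ i, C i) := Fintype.equivFinOfCardEq (by simp)
  refine ⟨finSumFinEquiv.symm.trans ((eA.symm.sumCongr eC.symm).trans
    (Equiv.sigmaSumDistrib _ _).symm), fun k => ?_⟩
  refine Fin.addCases (fun k => ?_) (fun k => ?_) k
  · rw [Equiv.trans_apply, finSumFinEquiv_symm_apply_castAdd]
    exact iff_of_true rfl k.isLt
  · rw [Equiv.trans_apply, finSumFinEquiv_symm_apply_natAdd]
    exact iff_of_false Bool.false_ne_true (Nat.le_add_right _ _).not_gt

lemma exists_triangle_pentagon_counts {ι : Type*} [Fintype ι] {ℓ m : ι → ℕ} {a c : ℕ}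
    (hm : ∀ i, Even (m i)) (hℓm : ∀ i, ℓ i ≤ m i) (hm2 : ∀ i, m i ≤ 2 * ℓ i)
    (hℓ : ∑ i, ℓ i = a + c) (hmsum : ∑ i, m i = a + 2 * c) :
    ∃ A C : ι → ℕ, (∀ i, Even (A i)) ∧ (∀ i, A i + C i = ℓ i) ∧ (∀ i, A i + 2 * C i = m i) ∧
      ∑ i, A i = a ∧ ∑ i, C i = c := by
  refine ⟨fun i => 2 * ℓ i - m i, fun i => m i - ℓ i, fun i => ?_, fun i => by grind,
    fun i => by grind, ?_⟩
  · obtain ⟨r, hr⟩ := hm i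
    exact ⟨ℓ i - r, by grind⟩
  · have h₁ : ∑ i, (2 * ℓ i - m i) + ∑ i, (m i - ℓ i) = a + c := by
      rw [← Finset.sum_add_distrib, ← hℓ]
      exact Finset.sum_congr rfl fun i _ => by grind
    have h₂ : ∑ i, (2 * ℓ i - m i) + 2 * ∑ i, (m i - ℓ i) = a + 2 * c := by
      rw [Finset.mul_sum, ← Finset.sum_add_distrib, ← hmsum]
      exact Finset.sum_congr rfl fun i _ => by grind
    exact ⟨by beta_reduce; omega, by beta_reduce; omega⟩

lemma exists_triangle_pentagon_counts_with_leave {ι : Type*} [Fintype ι] [DecidableEq ι]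
    {ℓ : ι → ℕ} {w a c b : ℕ} (i₀ : ι) (hweven : Even w)
    (hnb : a + 2 * c + 2 * b = Fintype.card ι * w) (hsum : ∑ i, ℓ i = a + c)
    (hb : 2 * b ≤ w) (hℓ₀ : (w - 2 * b) / 2 ≤ ℓ i₀ ∧ ℓ i₀ ≤ w - 2 * b)
    (hℓ : ∀ i ≠ i₀, w / 2 ≤ ℓ i ∧ ℓ i ≤ w) :
    ∃ A C : ι → ℕ, (∀ i, Even (A i)) ∧ (∀ i, A i + C i = ℓ i) ∧
      A i₀ + 2 * C i₀ = w - 2 * b ∧ (∀ i ≠ i₀, A i + 2 * C i = w) ∧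
      ∑ i, A i = a ∧ ∑ i, C i = c := by
  set m : ι → ℕ := fun i => if i = i₀ then w - 2 * b else w
  have hm : ∀ i, Even (m i) ∧ ℓ i ≤ m i ∧ m i ≤ 2 * ℓ i := fun i => by
    obtain ⟨r, hr⟩ := hweven
    by_cases hi : i = i₀
    · subst hi
      simp only [m, if_pos rfl]
      exact ⟨⟨r - b, by omega⟩, by omega, by omega⟩
    · have := hℓ i hi
      simp only [m, if_neg hi]
      exact ⟨⟨r, hr⟩, by omega, by omega⟩
  have hmsum : ∑ i, m i = a + 2 * c := by
    have := Finset.sum_congr rfl fun i (_ : i ∈ Finset.univ) =>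
      show m i + (if i = i₀ then 2 * b else 0) = w by simp only [m]; split_ifs <;> omega
    rw [Finset.sum_add_distrib, Finset.sum_ite_eq', if_pos (Finset.mem_univ _), Finset.sum_const,
      Finset.card_univ, smul_eq_mul] at this
    omega
  obtain ⟨A, C, hA, hAC, hAm, hsA, hsC⟩ := exists_triangle_pentagon_counts (fun i => (hm i).1)
    (fun i => (hm i).2.1) (fun i => (hm i).2.2) hsum hmsum
  exact ⟨A, C, hA, hAC, by simp [hAm, m], fun i hi => by simp [hAm, m, hi], hsA, hsC⟩

lemma Set.InjOn.exists_extend_of_le_ncard {V : Type*} [Nonempty V] {x : ℕ → V} {ℓ N : ℕ}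
    {W : Set V} (hx : InjOn x (Iio ℓ)) (hW : W.Finite) (hxW : MapsTo x (Iio ℓ) W) (hℓN : ℓ ≤ N)
    (hNW : N ≤ W.ncard) :
    ∃ f : ℕ → V, InjOn f (Iio N) ∧ MapsTo f (Iio N) W ∧ EqOn f x (Iio ℓ) := by
  classical
  have hX : (x '' Iio ℓ).ncard = ℓ := by rw [hx.ncard_image, ncard_Iio_nat]
  obtain ⟨U, hXU, hUW, hU⟩ := exists_subsuperset_card_eq hxW.image_subset (hX.trans_le hℓN) hNW
  have hUfin := hW.subset hUW
  obtain ⟨y, hy⟩ := (finite_Ico ℓ N).exists_bijOn_of_encard_eq (t := U \ x '' Iio ℓ) (by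
    rw [← (finite_Ico ℓ N).cast_ncard_eq, ← hUfin.sdiff.cast_ncard_eq, ncard_Ico_nat,
      ncard_sdiff hXU, hU, hX])
  have hyx : ∀ k ∈ Ico ℓ N, ∀ j < ℓ, y k ≠ x j := fun k hk j hj h =>
    (hy.mapsTo hk).2 (h ▸ mem_image_of_mem x hj)
  refine ⟨fun k => if k < ℓ then x k else y k, fun k hk k' hk' h => ?_, fun k hk => ?_,
    fun k hk => if_pos hk⟩
  · simp only [mem_Iio] at hk hk' h
    split_ifs at h with h₁ h₂ h₂
    · exact hx h₁ h₂ h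
    · exact (hyx k' ⟨not_lt.1 h₂, hk'⟩ k h₁ h.symm).elim
    · exact (hyx k ⟨not_lt.1 h₁, hk⟩ k' h₂ h).elim
    · exact hy.injOn ⟨not_lt.1 h₁, hk⟩ ⟨not_lt.1 h₂, hk'⟩ h
  · dsimp only
    split_ifs with h
    exacts [hxW h, hUW (hy.mapsTo ⟨not_lt.1 h, hk⟩).1]

namespace SimpleGraph

variable {V V' ι κ : Type*} {G : SimpleGraph V} {G' : SimpleGraph V'}

lemma Walk.exists_adj_of_mem_support {u v w : V} {p : G.Walk u v} (hp : ¬p.Nil)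
    (hw : w ∈ p.support) : ∃ w', G.Adj w w' := by
  obtain ⟨e, he, hwe⟩ := (mem_support_iff_exists_mem_edges_of_not_nil hp).1 hw
  obtain ⟨w', rfl⟩ := Sym2.mem_iff_exists.1 hwe
  exact ⟨w', p.edges_subset_edgeSet he⟩

lemma injOn_sym2Map_edgeSet {f : V → V'} (hf : InjOn f {v | ∃ w, G.Adj v w}) :
    InjOn (Sym2.map f) G.edgeSet := by
  intro e he e' he' h
  induction e using Sym2.ind with | _ a b => ?_
  induction e' using Sym2.ind with | _ c d => ?_
  have hf' : ∀ {x y z t}, G.Adj x y → G.Adj z t → f x = f z → x = z :=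
    fun hxy hzt h => hf ⟨_, hxy⟩ ⟨_, hzt⟩ h
  simp only [mem_edgeSet] at he he'
  simp only [Sym2.map_mk, Sym2.eq_iff] at h ⊢
  rcases h with ⟨h₁, h₂⟩ | ⟨h₁, h₂⟩
  · exact .inl ⟨hf' he he' h₁, hf' he.symm he'.symm h₂⟩
  · exact .inr ⟨hf' he he'.symm h₁, hf' he.symm he' h₂⟩

lemma Walk.IsCycle.map_of_injOn {u : V} {p : G.Walk u u} (hp : p.IsCycle) (f : G →g G')
    (hf : InjOn f {v | ∃ w, G.Adj v w}) : (p.map f).IsCycle := by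
  have hsupp : ∀ v ∈ p.support, ∃ w, G.Adj v w :=
    fun v hv => exists_adj_of_mem_support hp.not_nil hv
  have hnil := hp.not_nil
  rw [isCycle_def] at hp ⊢
  obtain ⟨htrail, -, hnodup⟩ := hp
  refine ⟨⟨?_⟩, ?_, ?_⟩
  · rw [edges_map]
    exact htrail.edges_nodup.map_on fun e he e' he' =>
      injOn_sym2Map_edgeSet hf (p.edges_subset_edgeSet he) (p.edges_subset_edgeSet he')
  · rwa [ne_eq, eq_nil_iff_nil, nil_map_iff]
  · rw [support_map, ← List.map_tail]
    exact hnodup.map_on fun v hv v' hv' =>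
      hf (hsupp v (List.mem_of_mem_tail hv)) (hsupp v' (List.mem_of_mem_tail hv'))

def IsCyclePacking {pv : ι → V} (pc : ∀ i, G.Walk (pv i) (pv i)) : Prop :=
  (∀ i, (pc i).IsCycle) ∧ ∀ i j, i ≠ j → ∀ e ∈ (pc i).edges, e ∉ (pc j).edges

namespace IsCyclePacking

variable {pv : ι → V} {pc : ∀ i, G.Walk (pv i) (pv i)}

lemma comp (h : IsCyclePacking pc) {f : κ → ι} (hf : Injective f) :
    IsCyclePacking fun k => pc (f k) :=
  ⟨fun k => h.1 (f k), fun _ _ hk => h.2 _ _ (hf.ne hk)⟩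

lemma map (h : IsCyclePacking pc) (f : G →g G') (hf : InjOn f {v | ∃ w, G.Adj v w}) :
    IsCyclePacking fun i => (pc i).map f := by
  refine ⟨fun i => (h.1 i).map_of_injOn f hf, fun i j hij e hei hej => ?_⟩
  rw [edges_map, List.mem_map] at hei hej
  obtain ⟨e₁, he₁, rfl⟩ := hei
  obtain ⟨e₂, he₂, he⟩ := hej
  rw [injOn_sym2Map_edgeSet hf ((pc j).edges_subset_edgeSet he₂)
    ((pc i).edges_subset_edgeSet he₁) he] at he₂
  exact h.2 i j hij e₁ he₁ he₂

lemma sigma {κ : ι → Type*} {pv : ∀ i, κ i → V} {pc : ∀ i j, G.Walk (pv i j) (pv i j)}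
    (h : ∀ i, IsCyclePacking (pc i)) (E : ι → Set (Sym2 V))
    (hE : ∀ i j, ∀ e ∈ (pc i j).edges, e ∈ E i) (hdisj : Pairwise (Disjoint on E)) :
    IsCyclePacking fun x : Σ i, κ i => pc x.1 x.2 := by
  refine ⟨fun x => (h x.1).1 x.2, ?_⟩
  rintro ⟨i, j⟩ ⟨i', j'⟩ hne e he he'
  by_cases hi : i = i'
  · subst hi
    exact (h i).2 j j' (fun hj => hne (hj ▸ rfl)) e he he'
  · exact Set.disjoint_left.1 (hdisj hi) (hE _ _ e he) (hE _ _ e he')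

end IsCyclePacking

def cycSucc (ℓ k : ℕ) : ℕ := if k + 1 = ℓ then 0 else k + 1

lemma cycSucc_lt {ℓ k : ℕ} (hk : k < ℓ) : cycSucc ℓ k < ℓ := by
  unfold cycSucc
  split_ifs <;> omega

/-- The cycle `inr 0, …, inr (A + C - 1)` together with all edges from `inl false` and
`inl true` to `inr k` for `k < A + 2 * C`: a labelled copy of `K_{{p,p'},W'} ∪ C`. -/
def pairCycleGraph (A C : ℕ) : SimpleGraph (Bool ⊕ ℕ) :=
  fromEdgeSet ({e | ∃ k < A + C, e = s(inr k, inr (cycSucc (A + C) k))} ∪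
    {e | ∃ d, ∃ k < A + 2 * C, e = s(inl d, inr k)})

namespace pairCycleGraph

variable {A C : ℕ}

lemma adj_inr_cycSucc (hℓ : 3 ≤ A + C) {k : ℕ} (hk : k < A + C) :
    (pairCycleGraph A C).Adj (inr k) (inr (cycSucc (A + C) k)) := by
  refine (fromEdgeSet_adj _).2 ⟨.inl ⟨k, hk, rfl⟩, ?_⟩
  unfold cycSucc
  split_ifs <;> simp only [ne_eq, inr.injEq] <;> omega

lemma adj_inl_inr (d : Bool) {k : ℕ} (hk : k < A + 2 * C) :
    (pairCycleGraph A C).Adj (inl d) (inr k) :=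
  (fromEdgeSet_adj _).2 ⟨.inr ⟨d, k, hk, rfl⟩, by simp⟩

lemma lt_of_adj_inr {k : ℕ} {v : Bool ⊕ ℕ} (h : (pairCycleGraph A C).Adj (inr k) v) :
    k < A + 2 * C := by
  obtain ⟨⟨j, hj, he⟩ | ⟨d, j, hj, he⟩, -⟩ := (fromEdgeSet_adj _).1 h <;>
    simp only [Sym2.eq_iff, inr.injEq, reduceCtorEq, false_and, false_or] at he
  · have := cycSucc_lt hj
    omega
  · omega

def triangle (hℓ : 3 ≤ A + C) (t : Fin A) : (pairCycleGraph A C).Walk (inr t) (inr t) :=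
  have := cycSucc_lt (ℓ := A + C) (k := t) (by omega)
  .cons (adj_inr_cycSucc hℓ (by omega))
    (.cons (adj_inl_inr (decide (t.1 % 2 = 1)) (by omega)).symm
      (.cons (adj_inl_inr _ (by omega)) .nil))

def pentagon (hℓ : 3 ≤ A + C) (s : Fin C) :
    (pairCycleGraph A C).Walk (inr (A + s)) (inr (A + s)) :=
  have := cycSucc_lt (ℓ := A + C) (k := A + s) (by omega)
  .cons (adj_inr_cycSucc hℓ (by omega))
    (.cons (adj_inl_inr true (by omega)).symm
      (.cons (adj_inl_inr true (k := A + C + s) (by omega))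
        (.cons (adj_inl_inr false (by omega)).symm
          (.cons (adj_inl_inr false (by omega)) .nil))))

def pieceStart : Fin A ⊕ Fin C → Bool ⊕ ℕ
  | inl t => inr t
  | inr s => inr (A + s)

def piece (hℓ : 3 ≤ A + C) :
    ∀ i : Fin A ⊕ Fin C, (pairCycleGraph A C).Walk (pieceStart i) (pieceStart i)
  | inl t => triangle hℓ t
  | inr s => pentagon hℓ s

lemma length_piece (hℓ : 3 ≤ A + C) (i : Fin A ⊕ Fin C) :
    (piece hℓ i).length = if i.isLeft then 3 else 5 := by
  rcases i with t | s <;> rfl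

lemma edges_piece_inl (hℓ : 3 ≤ A + C) (t : Fin A) :
    (piece hℓ (inl t)).edges = [s(inr (t : ℕ), inr (cycSucc (A + C) t)),
      s(inr (cycSucc (A + C) t), inl (decide (t.1 % 2 = 1))),
      s(inl (decide (t.1 % 2 = 1)), inr (t : ℕ))] :=
  rfl

lemma edges_piece_inr (hℓ : 3 ≤ A + C) (s : Fin C) :
    (piece hℓ (inr s)).edges = [s(inr (A + s), inr (cycSucc (A + C) (A + s))),
      s(inr (cycSucc (A + C) (A + s)), inl true), s(inl true, inr (A + C + s)),
      s(inr (A + C + s), inl false), s(inl false, inr (A + s))] :=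
  rfl

lemma isCycle_triangle (hℓ : 3 ≤ A + C) (t : Fin A) : (triangle hℓ t).IsCycle := by
  have := t.isLt
  simp [triangle, isCycle_def, isTrail_def]
  unfold cycSucc
  split_ifs <;> omega

lemma isCycle_pentagon (hℓ : 3 ≤ A + C) (s : Fin C) : (pentagon hℓ s).IsCycle := by
  have := s.isLt
  simp [pentagon, isCycle_def, isTrail_def]
  unfold cycSucc
  split_ifs <;> omega

/-- `A` is even so that the last triangle has apex `inl true`, while the next piece along the
cycle joins its first vertex to `inl false`. -/
theorem isCyclePacking_piece (hA : Even A) (hℓ : 3 ≤ A + C) : IsCyclePacking (piece hℓ) := by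
  refine ⟨?_, ?_⟩
  · rintro (t | s)
    exacts [isCycle_triangle hℓ t, isCycle_pentagon hℓ s]
  · obtain ⟨k, hk⟩ := hA
    rintro (⟨t, ht⟩ | ⟨s, hs⟩) (⟨t', ht'⟩ | ⟨s', hs'⟩) hne e he he' <;>
      simp only [ne_eq, inl.injEq, inr.injEq, reduceCtorEq, Fin.mk.injEq] at hne <;>
      simp only [edges_piece_inl, edges_piece_inr, cycSucc, List.mem_cons, List.not_mem_nil,
        or_false] at he he' <;>
      split_ifs at he he' <;>
      rcases he with rfl | rfl | rfl | rfl | rfl <;>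
      simp at he' <;> omega

theorem iUnion_edges_piece (hA : Even A) (hℓ : 3 ≤ A + C) :
    ⋃ i, {e | e ∈ (piece hℓ i).edges} = (pairCycleGraph A C).edgeSet := by
  refine (iUnion_subset fun i e he => (piece hℓ i).edges_subset_edgeSet he).antisymm fun e he => ?_
  suffices ∃ i, e ∈ (piece hℓ i).edges from mem_iUnion.2 this
  obtain ⟨r, hr⟩ := hA
  rw [pairCycleGraph, edgeSet_fromEdgeSet] at he
  obtain ⟨⟨k, hk, rfl⟩ | ⟨d, k, hk, rfl⟩, -⟩ := he
  · by_cases hkA : k < A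
    · exact ⟨inl ⟨k, hkA⟩, by simp [edges_piece_inl]⟩
    · exact ⟨inr ⟨k - A, by omega⟩, by simp [edges_piece_inr, show A + (k - A) = k by omega]⟩
  -- On the cycle, `inl false` meets `inr k` in the triangle `2 ⌊k / 2⌋` or the pentagon at `k`,
  -- and `inl true` in the triangle `2 ⌊(k - 1) / 2⌋ + 1` or the pentagon at `k - 1` (mod `A + C`).
  by_cases hkℓ : A + C ≤ k
  · refine ⟨inr ⟨k - (A + C), by omega⟩, ?_⟩
    cases d <;> simp [edges_piece_inr, show A + C + (k - (A + C)) = k by omega]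
  cases d
  · by_cases hkA : k < A
    · refine ⟨inl ⟨2 * (k / 2), by omega⟩, ?_⟩
      simp [edges_piece_inl, cycSucc]
      split_ifs <;> omega
    · exact ⟨inr ⟨k - A, by omega⟩, by simp [edges_piece_inr, show A + (k - A) = k by omega]⟩
  · by_cases hk0 : k = 0
    · subst hk0
      by_cases hC : C = 0
      · refine ⟨inl ⟨A - 1, by omega⟩, ?_⟩
        simp [edges_piece_inl, cycSucc]
        omega
      · refine ⟨inr ⟨C - 1, by omega⟩, ?_⟩
        simp [edges_piece_inr, cycSucc]
        omega
    by_cases hkA : k ≤ A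
    · refine ⟨inl ⟨2 * ((k - 1) / 2) + 1, by omega⟩, ?_⟩
      simp [edges_piece_inl, cycSucc]
      split_ifs <;> omega
    · refine ⟨inr ⟨k - 1 - A, by omega⟩, ?_⟩
      simp [edges_piece_inr, cycSucc]
      split_ifs <;> omega

variable {p : Bool → V} {f : ℕ → V}

lemma injOn_sumElim (hp : Injective p) (hf : InjOn f (Iio (A + 2 * C)))
    (hpf : ∀ d, ∀ k < A + 2 * C, p d ≠ f k) :
    InjOn (Sum.elim p f) {u | ∃ u', (pairCycleGraph A C).Adj u u'} := by
  rintro (d | k) ⟨_, hu⟩ (d' | k') ⟨_, hu'⟩ h <;> simp only [Sum.elim_inl, Sum.elim_inr] at h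
  · rw [hp h]
  · exact (hpf d k' (lt_of_adj_inr hu') h).elim
  · exact (hpf d' k (lt_of_adj_inr hu) h.symm).elim
  · rw [hf (lt_of_adj_inr hu) (lt_of_adj_inr hu') h]

theorem image_sym2Map_edgeSet {v : V} {c : G.Walk v v} (hℓ : 3 ≤ A + C)
    (hlen : c.length = A + C) (hfc : EqOn f c.getVert (Iio (A + C))) :
    Sym2.map (Sum.elim p f) '' (pairCycleGraph A C).edgeSet =
      {e | e ∈ c.edges} ∪ image2 (fun x y => s(x, y)) (range p) (f '' Iio (A + 2 * C)) := by
  have hf_cycSucc : ∀ k < A + C, f (cycSucc (A + C) k) = c.getVert (k + 1) := by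
    intro k hk
    unfold cycSucc
    split_ifs with h
    · rw [h, ← hlen, getVert_length, hfc (by simp; omega), getVert_zero]
    · exact hfc (by simp; omega)
  ext e
  constructor
  · rintro ⟨e, he, rfl⟩
    rw [pairCycleGraph, edgeSet_fromEdgeSet] at he
    obtain ⟨⟨k, hk, rfl⟩ | ⟨d, k, hk, rfl⟩, -⟩ := he
    · left
      rw [mem_ofPred_eq, Sym2.map_mk, Sum.elim_inr, Sum.elim_inr, hf_cycSucc k hk, hfc hk]
      exact (mk_mem_edges_iff_exists c).2 ⟨k, hlen ▸ hk, rfl⟩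
    · exact .inr ⟨p d, mem_range_self d, f k, mem_image_of_mem f hk, rfl⟩
  · rintro (he | ⟨_, ⟨d, rfl⟩, _, ⟨k, hk, rfl⟩, rfl⟩)
    · induction e using Sym2.ind with | _ u u' => ?_
      obtain ⟨k, hk, h⟩ := (mk_mem_edges_iff_exists c).1 he
      rw [hlen] at hk
      refine ⟨_, (mem_edgeSet _).2 (adj_inr_cycSucc hℓ hk), ?_⟩
      rw [Sym2.map_mk, Sum.elim_inr, Sum.elim_inr, hf_cycSucc k hk, hfc hk, h]
    · exact ⟨_, (mem_edgeSet _).2 (adj_inl_inr d hk), rfl⟩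

end pairCycleGraph

open pairCycleGraph

lemma mem_of_mem_completeOn_edgeSet {W : Set V} {e : Sym2 V} (he : e ∈ (completeOn W).edgeSet)
    {v : V} (hv : v ∈ e) : v ∈ W := by
  induction e using Sym2.ind with | _ a b => ?_
  rcases Sym2.mem_iff.1 hv with rfl | rfl
  exacts [he.2.1, he.2.2]

lemma Walk.getVert_mem_of_completeOn {W : Set V} {u v : V} {c : (completeOn W).Walk u v}
    (hc : ¬c.Nil) (k : ℕ) : c.getVert k ∈ W :=
  have ⟨_, h⟩ := exists_adj_of_mem_support hc (c.getVert_mem_support k)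
  h.2.1

theorem exists_isCyclePacking_pair_sup_cycle {H : SimpleGraph V} {W : Set V} {v : V}
    {c : (completeOn W).Walk v v} (hc : c.IsCycle) (hcH : ∀ e ∈ c.edges, e ∈ H.edgeSet)
    {p : Bool → V} (hp : Injective p) (hpW : ∀ d, p d ∉ W) (hpH : ∀ d, ∀ w ∈ W, H.Adj (p d) w)
    {A C : ℕ} (hA : Even A) (hlen : c.length = A + C) (hW : A + 2 * C ≤ W.ncard) :
    ∃ W' ⊆ W, W'.ncard = A + 2 * C ∧
      ∃ (pv : Fin A ⊕ Fin C → V) (pc : ∀ i, H.Walk (pv i) (pv i)), IsCyclePacking pc ∧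
        (∀ i, (pc i).length = if i.isLeft then 3 else 5) ∧
        ⋃ i, {e | e ∈ (pc i).edges} =
          {e | e ∈ c.edges} ∪ image2 (fun x y => s(x, y)) (range p) W' := by
  have hℓ : 3 ≤ A + C := hlen ▸ hc.three_le_length
  have : Nonempty V := ⟨v⟩
  have hx : InjOn c.getVert (Iio (A + C)) := hc.getVert_injOn'.mono fun k hk => by
    simp only [mem_Iio] at hk
    simp only [mem_ofPred_eq]
    omega
  obtain ⟨f, hf, hfW, hfc⟩ := hx.exists_extend_of_le_ncard (finite_of_ncard_pos (by omega))
    (fun k _ => c.getVert_mem_of_completeOn hc.not_nil k) (by omega) hW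
  have himage := image_sym2Map_edgeSet (p := p) hℓ hlen hfc
  let ψ : pairCycleGraph A C →g H := ⟨Sum.elim p f, fun {a b} hab => by
    have := himage.subset (mem_image_of_mem _ ((mem_edgeSet _).2 hab))
    rw [Sym2.map_mk] at this
    rcases this with h | ⟨_, ⟨d, rfl⟩, w, hw, h⟩
    · exact hcH _ h
    · rw [← mem_edgeSet, ← h]
      exact hpH d w (hfW.image_subset hw)⟩
  have hψ : InjOn ψ {u | ∃ u', (pairCycleGraph A C).Adj u u'} :=
    injOn_sumElim hp hf fun d k hk h => hpW d (h ▸ hfW hk)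
  refine ⟨_, hfW.image_subset, hf.ncard_image.trans (ncard_Iio_nat _), fun i => ψ (pieceStart i),
    fun i => (piece hℓ i).map ψ, (isCyclePacking_piece hA hℓ).map ψ hψ,
    fun i => (length_map _ _).trans (length_piece hℓ i), ?_⟩
  rw [← himage, ← iUnion_edges_piece hA hℓ, image_iUnion]
  ext e
  simp [ψ]

end SimpleGraph

section Assembly

variable {V ι : Type*} {W : Set V} {p : ι × Bool → V}

lemma pairwise_disjoint_union_image2 {E : ι → Set (Sym2 V)}
    (hE : ∀ i, E i ⊆ (completeOn W).edgeSet) (hEd : Pairwise (Disjoint on E)) (hp : Injective p)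
    (hpW : Disjoint (range p) W) {W' : ι → Set V} (hW' : ∀ i, W' i ⊆ W) :
    Pairwise (Disjoint on fun i =>
      E i ∪ image2 (fun x y => s(x, y)) (range fun d => p (i, d)) (W' i)) := by
  have hpW' : ∀ x, p x ∉ W := fun x => disjoint_left.1 hpW (mem_range_self x)
  have hEp : ∀ i j d w, s(p (j, d), w) ∉ E i := fun i j d w he =>
    hpW' _ (mem_of_mem_completeOn_edgeSet (hE i he) (Sym2.mem_mk_left _ _))
  intro i j hij
  simp only [onFun, disjoint_union_left, disjoint_union_right]
  refine ⟨⟨hEd hij, ?_⟩, ?_, ?_⟩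
  · rw [Set.disjoint_left]
    rintro _ ⟨_, ⟨d, rfl⟩, w, -, rfl⟩
    exact hEp j i d w
  · rw [Set.disjoint_right]
    rintro _ ⟨_, ⟨d, rfl⟩, w, -, rfl⟩
    exact hEp i j d w
  · rw [Set.disjoint_left]
    rintro _ ⟨_, ⟨d, rfl⟩, w, hw, rfl⟩ ⟨_, ⟨d', rfl⟩, w', hw', h⟩
    rcases Sym2.eq_iff.1 h with ⟨h, -⟩ | ⟨h, -⟩
    · exact hij (congrArg Prod.fst (hp h)).symm
    · exact hpW' _ (h ▸ hW' i hw)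

lemma edgeSet_sdiff_iUnion_union_image2 {E : ι → Set (Sym2 V)}
    (hE : ∀ i, E i ⊆ (completeOn W).edgeSet) (hp : Injective p) (hpW : Disjoint (range p) W)
    {W' : ι → Set V} (i₀ : ι) (hW' : ∀ i ≠ i₀, W' i = W) :
    (fromEdgeSet ((bipGraph (range p) W).edgeSet ∪ ⋃ i, E i)).edgeSet \
        ⋃ i, (E i ∪ image2 (fun x y => s(x, y)) (range fun d => p (i, d)) (W' i)) =
      image2 (fun x y => s(x, y)) (range fun d => p (i₀, d)) (W \ W' i₀) := by
  have hpW' : ∀ x, p x ∉ W := fun x => disjoint_left.1 hpW (mem_range_self x)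
  have key : ∀ x, ∀ w ∈ W,
      s(p x, w) ∉ ⋃ i, (E i ∪ image2 (fun x y => s(x, y)) (range fun d => p (i, d)) (W' i)) →
      s(p x, w) ∈ image2 (fun x y => s(x, y)) (range fun d => p (i₀, d)) (W \ W' i₀) := by
    rintro ⟨i, d⟩ w hw hcov
    have hw' : w ∉ W' i := fun h => hcov (mem_iUnion.2 ⟨i, .inr ⟨_, ⟨d, rfl⟩, w, h, rfl⟩⟩)
    obtain rfl : i = i₀ := by
      by_contra hi
      exact hw' ((hW' i hi).symm ▸ hw)
    exact ⟨_, ⟨d, rfl⟩, w, ⟨hw, hw'⟩, rfl⟩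
  ext e
  rw [edgeSet_fromEdgeSet]
  constructor
  · rintro ⟨⟨hbip | he, -⟩, hcov⟩
    · induction e using Sym2.ind with | _ u u' => ?_
      obtain ⟨-, ⟨⟨x, rfl⟩, hw⟩ | ⟨hw, ⟨x, rfl⟩⟩⟩ := hbip
      · exact key x u' hw hcov
      · rw [Sym2.eq_swap] at hcov ⊢
        exact key x u hw hcov
    · obtain ⟨i, he⟩ := mem_iUnion.1 he
      exact (hcov (mem_iUnion.2 ⟨i, .inl he⟩)).elim
  · rintro ⟨_, ⟨d, rfl⟩, w, ⟨hw, hw'⟩, rfl⟩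
    have hne : p (i₀, d) ≠ w := fun h => hpW' _ (h ▸ hw)
    refine ⟨⟨.inl ⟨hne, .inl ⟨mem_range_self _, hw⟩⟩, by simpa using hne⟩, fun hcov => ?_⟩
    obtain ⟨i, he | ⟨_, ⟨d', rfl⟩, w', hw'', h⟩⟩ := mem_iUnion.1 hcov
    · exact hpW' _ (mem_of_mem_completeOn_edgeSet (hE i he) (Sym2.mem_mk_left _ _))
    · rcases Sym2.eq_iff.1 h with ⟨hpp, rfl⟩ | ⟨hpw, -⟩
      · obtain rfl : i = i₀ := congrArg Prod.fst (hp hpp)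
        exact hw' hw''
      · exact hpW' _ (hpw ▸ hw)

theorem exists_isCyclePacking_bipGraph_sup_cycles [Fintype ι] (hp : Injective p)
    (hpW : Disjoint (range p) W) {cv : ι → V} {cw : ∀ i, (completeOn W).Walk (cv i) (cv i)}
    (hcyc : ∀ i, (cw i).IsCycle) (hedisj : ∀ i j, i ≠ j → ∀ e ∈ (cw i).edges, e ∉ (cw j).edges)
    {A C : ι → ℕ} (hA : ∀ i, Even (A i)) (hlen : ∀ i, (cw i).length = A i + C i) (i₀ : ι)
    (hm₀ : A i₀ + 2 * C i₀ ≤ W.ncard) (hm : ∀ i ≠ i₀, A i + 2 * C i = W.ncard)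
    (H : SimpleGraph V)
    (hH : H = fromEdgeSet ((bipGraph (range p) W).edgeSet ∪ ⋃ i, {e | e ∈ (cw i).edges})) :
    ∃ (pv : Fin (∑ i, A i + ∑ i, C i) → V) (pc : ∀ k, H.Walk (pv k) (pv k)),
      IsCyclePacking pc ∧ (∀ k : Fin _, (pc k).length = if (k : ℕ) < ∑ i, A i then 3 else 5) ∧
      ∃ Q ⊆ W, Q.ncard = W.ncard - (A i₀ + 2 * C i₀) ∧
        H.edgeSet \ ⋃ k, {e | e ∈ (pc k).edges} =
          image2 (fun x y => s(x, y)) (range fun d => p (i₀, d)) Q := by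
  have hpW' : ∀ x, p x ∉ W := fun x => disjoint_left.1 hpW (mem_range_self x)
  have hWfin : W.Finite := finite_of_ncard_pos <| by
    have := (hcyc i₀).three_le_length
    have := hlen i₀
    omega
  have hcH : ∀ i, ∀ e ∈ (cw i).edges, e ∈ H.edgeSet := fun i e he => by
    rw [hH, edgeSet_fromEdgeSet]
    exact ⟨.inr (mem_iUnion.2 ⟨i, he⟩),
      not_isDiag_of_mem_edgeSet _ ((cw i).edges_subset_edgeSet he)⟩
  have hpH : ∀ x, ∀ w ∈ W, H.Adj (p x) w := fun x w hw => by
    have hne : p x ≠ w := fun h => hpW' x (h ▸ hw)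
    rw [hH, fromEdgeSet_adj]
    exact ⟨.inl ⟨hne, .inl ⟨mem_range_self _, hw⟩⟩, hne⟩
  have hmW : ∀ i, A i + 2 * C i ≤ W.ncard := fun i => by
    by_cases hi : i = i₀
    exacts [hi ▸ hm₀, (hm i hi).le]
  choose W' hW'W hW'card pv pc hpack hlen' hunion using fun i =>
    exists_isCyclePacking_pair_sup_cycle (hcyc i) (hcH i) (hp.comp (Prod.mk_right_injective i))
      (fun d => hpW' _) (fun d => hpH _) (hA i) (hlen i) (hmW i)
  have hW' : ∀ i ≠ i₀, W' i = W := fun i hi =>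
    eq_of_subset_of_ncard_le (hW'W i) (by rw [hW'card, hm i hi]) hWfin
  obtain ⟨σ, hσ⟩ := exists_finAddEquiv_sigma_sum A C
  have hpack' := (IsCyclePacking.sigma hpack _ (fun i j e he => hunion i ▸ mem_iUnion.2 ⟨j, he⟩)
    (pairwise_disjoint_union_image2 (fun i => (cw i).edges_subset_edgeSet)
      (fun i j hij => Set.disjoint_left.2 (hedisj i j hij)) hp hpW hW'W)).comp σ.injective
  refine ⟨fun k => pv (σ k).1 (σ k).2, fun k => pc (σ k).1 (σ k).2, hpack',
    fun k => (hlen' _ _).trans (if_congr (hσ k) rfl rfl), W \ W' i₀, sdiff_subset,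
    by rw [ncard_sdiff (hW'W i₀) (hWfin.subset (hW'W i₀)), hW'card], ?_⟩
  rw [σ.surjective.iUnion_comp (fun x => {e | e ∈ (pc x.1 x.2).edges}), iUnion_sigma]
  simp only [hunion]
  rw [hH]
  exact edgeSet_sdiff_iUnion_union_image2 (fun i => (cw i).edges_subset_edgeSet) hp hpW i₀ hW'

end Assembly

theorem stmt15_general {V : Type*} (U' W : Set V) (hdisj : Disjoint U' W)
    (n w a c b : ℕ)
    (hU' : U'.ncard = 2 * n) (hW : W.ncard = w) (hweven : Even w)
    (hac : ¬ (a = 0 ∧ c = 0))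
    (hnb : a + 2 * c + 2 * b = n * w)
    (ℓ : Fin n → ℕ) (hsum : ∑ i, ℓ i = a + c)
    (hℓ : ∀ i : Fin n,
      (i.val = 0 →
        (w - 2 * b) / 2 ≤ ℓ i ∧ ℓ i ≤ w - 2 * b ∧ ℓ i ≠ 1 ∧ ℓ i ≠ 2) ∧
      (i.val ≠ 0 → w / 2 ≤ ℓ i ∧ ℓ i ≤ w))
    (cv : Fin n → V) (cw : ∀ i, (completeOn W).Walk (cv i) (cv i))
    (hcyc : ∀ i, (cw i).IsCycle) (hlen : ∀ i, (cw i).length = ℓ i)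
    (hedisj : ∀ i j, i ≠ j → ∀ e ∈ (cw i).edges, e ∉ (cw j).edges)
    (H : SimpleGraph V)
    (hH : H = SimpleGraph.fromEdgeSet
      ((bipGraph U' W).edgeSet ∪ ⋃ i, {e | e ∈ (cw i).edges})) :
    ∃ (pv : Fin (a + c) → V) (pc : ∀ i, H.Walk (pv i) (pv i)),
      (∀ i, (pc i).IsCycle) ∧
      (∀ i : Fin (a + c), (pc i).length = if i.val < a then 3 else 5) ∧
      (∀ i j, i ≠ j → ∀ e ∈ (pc i).edges, e ∉ (pc j).edges) ∧
      ∃ P Q : Set V, P.ncard = 2 ∧ Q.ncard = 2 * b ∧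
        ((P ⊆ U' ∧ Q ⊆ W) ∨ (P ⊆ W ∧ Q ⊆ U')) ∧
        H.edgeSet \ (⋃ i, {e | e ∈ (pc i).edges})
          = Set.image2 (fun x y => s(x, y)) P Q := by
  have hn : 0 < n := Nat.pos_of_ne_zero fun hn => hac (by subst hn; simp at hsum; omega)
  set i₀ : Fin n := ⟨0, hn⟩
  obtain ⟨p, hp, rfl⟩ : ∃ p : Fin n × Bool → V, Injective p ∧ range p = U' :=
    (finite_of_ncard_pos (by omega)).exists_injective_range_eq (by simp [hU', mul_comm])
  have hℓ₀ := (hℓ i₀).1 rfl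
  have h3 := hlen i₀ ▸ (hcyc i₀).three_le_length
  obtain ⟨A, C, hA, hAC, hA₀, hAi, rfl, rfl⟩ := exists_triangle_pentagon_counts_with_leave i₀ hweven
    (by simpa using hnb) hsum (by omega) ⟨hℓ₀.1, hℓ₀.2.1⟩
    (fun i hi => (hℓ i).2 fun h => hi (Fin.ext h))
  obtain ⟨pv, pc, hpack, hlen', Q, hQW, hQcard, hleave⟩ :=
    exists_isCyclePacking_bipGraph_sup_cycles hp hdisj hcyc hedisj hA
      (fun i => (hlen i).trans (hAC i).symm) i₀ (by omega) (fun i hi => by rw [hAi i hi, hW]) H hH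
  refine ⟨pv, pc, hpack.1, hlen', hpack.2, _, Q,
    (ncard_range_of_injective (hp.comp (Prod.mk_right_injective i₀))).trans (by simp), ?_,
    .inl ⟨range_comp_subset_range _ p, hQW⟩, hleave⟩
  omega

theorem stmt15 {V : Type*} [Fintype V] (U' W : Set V) (hdisj : Disjoint U' W)
    (n w a c b : ℕ)
    (hU' : U'.ncard = 2 * n) (hW : W.ncard = w) (hw : 6 ≤ w) (hweven : Even w)
    (haeven : Even a) (hac : ¬ (a = 0 ∧ c = 0))
    (hnb : a + 2 * c + 2 * b = n * w) (hb : 2 * b + 2 ≤ w)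
    (ℓ : Fin n → ℕ) (hsum : ∑ i, ℓ i = a + c)
    (hℓ : ∀ i : Fin n,
      (i.val = 0 →
        (w - 2 * b) / 2 ≤ ℓ i ∧ ℓ i ≤ w - 2 * b ∧ ℓ i ≠ 1 ∧ ℓ i ≠ 2) ∧
      (i.val ≠ 0 → w / 2 ≤ ℓ i ∧ ℓ i ≤ w))
    (cv : Fin n → V) (cw : ∀ i, (completeOn W).Walk (cv i) (cv i))
    (hcyc : ∀ i, (cw i).IsCycle) (hlen : ∀ i, (cw i).length = ℓ i)
    (hedisj : ∀ i j, i ≠ j → ∀ e ∈ (cw i).edges, e ∉ (cw j).edges)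
    (H : SimpleGraph V)
    (hH : H = SimpleGraph.fromEdgeSet
      ((bipGraph U' W).edgeSet ∪ ⋃ i, {e | e ∈ (cw i).edges})) :
    ∃ (pv : Fin (a + c) → V) (pc : ∀ i, H.Walk (pv i) (pv i)),
      (∀ i, (pc i).IsCycle) ∧
      (∀ i : Fin (a + c), (pc i).length = if i.val < a then 3 else 5) ∧
      (∀ i j, i ≠ j → ∀ e ∈ (pc i).edges, e ∉ (pc j).edges) ∧
      ∃ P Q : Set V, P.ncard = 2 ∧ Q.ncard = 2 * b ∧
        ((P ⊆ U' ∧ Q ⊆ W) ∨ (P ⊆ W ∧ Q ⊆ U')) ∧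
        H.edgeSet \ (⋃ i, {e | e ∈ (pc i).edges})
          = Set.image2 (fun x y => s(x, y)) P Q :=
  stmt15_general U' W hdisj n w a c b hU' hW hweven hac hnb ℓ hsum hℓ cv cw hcyc hlen hedisj H hH
end
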